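/- arXiv:1912.01573 — 3 statements merged into one kernel-verified Lean document; each statement's English description precedes it below -/
import Mathlib

section
/- Every positive integer n has a unique representation n = Σ_{i=2}^{r} ε_i t_i where t is the tribonacci sequence (t_0 = 0, t_1 = t_2 = 1, t_n = t_{n-1} + t_{n-2} + t_{n-3}), each ε_i ∈ {0,1}, and ε_i ε_{i+1} ε_{i+2} = 0 for all i (no three consecutive tribonacci numbers are used). -/
/-- Tribonacci sequence with t 0 = 0, t 1 = t 2 = 1. -/
def trib : ℕ → ℕ
  | 0 => 0
  | 1 => 1
  | 2 => 1
  | n + 3 => trib (n + 2) + trib (n + 1) + trib n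

lemma trib_add3 (n : ℕ) : trib (n+3) = trib (n+2) + trib (n+1) + trib n := rfl

lemma trib_mono : Monotone trib := by
  apply monotone_nat_of_le_succ
  intro n
  match n with
  | 0 => simp [trib]
  | 1 => simp [trib]
  | m + 2 => rw [trib_add3]; omega

lemma trib_pos {n : ℕ} (h : 1 ≤ n) : 0 < trib n := by
  have := trib_mono h
  exact this

lemma le_trib : ∀ n, n ≤ trib (n + 2) := by
  intro n
  induction n using Nat.strong_induction_on with
  | _ n ih =>
    match n with
    | 0 => simp [trib]
    | 1 => simp [trib]
    | m + 2 =>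
      have h1 := ih (m+1) (by omega)
      have h2 : 0 < trib (m + 1 + 1) := trib_pos (by omega)
      rw [show m + 2 + 2 = (m+1) + 3 by ring, trib_add3]
      omega

lemma trib_pred {s : ℕ} (h : 2 ≤ s) : trib (s-1) + trib (s-2) ≤ trib s := by
  match s, h with
  | 2, _ => simp [trib]
  | m + 3, _ => simp only [show m+3-1 = m+2 from rfl, show m+3-2 = m+1 from rfl, trib_add3]; omega

lemma trib_succ_eq {s : ℕ} (h : 2 ≤ s) : trib (s+1) = trib s + trib (s-1) + trib (s-2) := by
  match s, h with
  | m + 2, _ => rw [show m+2+1 = m+3 from rfl, trib_add3]; rfl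

lemma sum_ext (ε : ℕ → ℕ) {a b : ℕ} (hab : a ≤ b) (h : ∀ i, i ∉ Finset.Icc 2 a → ε i = 0) :
    ∑ i ∈ Finset.Icc 2 b, ε i * trib i = ∑ i ∈ Finset.Icc 2 a, ε i * trib i := by
  refine (Finset.sum_subset (Finset.Icc_subset_Icc_right hab) fun x _ hxa => ?_).symm
  rw [h x hxa, zero_mul]

lemma sum_top (ε : ℕ → ℕ) {r : ℕ} (hr : 2 ≤ r) :
    ∑ i ∈ Finset.Icc 2 r, ε i * trib i
      = (∑ i ∈ Finset.Icc 2 (r-1), ε i * trib i) + ε r * trib r := by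
  obtain ⟨m, rfl⟩ : ∃ m, r = m + 2 := ⟨r - 2, by omega⟩
  rw [show m + 2 = (m+1) + 1 from rfl, Finset.sum_Icc_succ_top (by omega)]
  simp

lemma sum_lt (ε : ℕ → ℕ) (h1 : ∀ i, ε i ≤ 1)
    (h3 : ∀ i, ε i * ε (i + 1) * ε (i + 2) = 0) (r : ℕ) :
    ∑ i ∈ Finset.Icc 2 r, ε i * trib i < trib (r+1) := by
  induction r using Nat.strong_induction_on with
  | _ r ih =>
    rcases lt_or_ge r 2 with hr | hr
    · rw [Finset.Icc_eq_empty (by omega)]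
      simpa using trib_pos (show 1 ≤ r + 1 by omega)
    rw [sum_top ε hr]
    rcases Nat.lt_or_ge r 3 with hr3 | hr3
    · -- r = 2
      obtain rfl : r = 2 := by omega
      have := h1 2
      have h0 : ∑ i ∈ Finset.Icc 2 (1:ℕ), ε i * trib i = 0 := by
        rw [Finset.Icc_eq_empty (by omega)]; rfl
      simp only [show (2:ℕ)-1 = 1 from rfl, h0]
      have : trib 2 = 1 := rfl
      have : trib 3 = 2 := rfl
      interval_cases h : ε 2 <;> simp [trib]
    · -- r ≥ 3
      rcases Nat.eq_zero_or_pos (ε r) with he | he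
      · rw [he, zero_mul, add_zero]
        exact lt_of_lt_of_le (ih (r-1) (by omega) |>.trans_le
          (by rw [show r - 1 + 1 = r by omega])) (trib_mono (by omega))
      have her : ε r = 1 := by have := h1 r; omega
      rw [sum_top ε (show 2 ≤ r - 1 by omega)]
      rcases Nat.eq_zero_or_pos (ε (r-1)) with he1 | he1
      · -- ε (r-1) = 0
        rw [he1, zero_mul, add_zero, her, one_mul]
        have hb := ih (r-2) (by omega)
        rw [show r - 2 + 1 = r - 1 by omega] at hb
        rw [show r - 1 - 1 = r - 2 by omega]
        have := trib_succ_eq (show 2 ≤ r by omega)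
        omega
      · have her1 : ε (r-1) = 1 := by have := h1 (r-1); omega
        have her2 : ε (r-2) = 0 := by
          have := h3 (r-2)
          rw [show r - 2 + 1 = r - 1 by omega, show r - 2 + 2 = r by omega, her, her1] at this
          omega
        rcases Nat.lt_or_ge r 4 with hr4 | hr4
        · -- r = 3
          obtain rfl : r = 3 := by omega
          have h0 : ∑ i ∈ Finset.Icc 2 (3-1-1:ℕ), ε i * trib i = 0 := by
            rw [Finset.Icc_eq_empty (by omega)]; rfl
          rw [h0, her, her1]
          simp [trib]
        · rw [sum_top ε (show 2 ≤ r - 1 - 1 by omega),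
            show r - 1 - 1 = r - 2 by omega, her2, zero_mul, add_zero, her, her1, one_mul, one_mul]
          have hb := ih (r-2-1) (by omega)
          rw [show r - 2 - 1 + 1 = r - 2 by omega] at hb
          have := trib_succ_eq (show 2 ≤ r by omega)
          omega

def IsRep (ε : ℕ → ℕ) (n : ℕ) : Prop :=
  (∀ i, ε i ≤ 1) ∧
  (∀ i, ε i * ε (i + 1) * ε (i + 2) = 0) ∧
  (∃ r, (∀ i, i ∉ Finset.Icc 2 r → ε i = 0) ∧
    n = ∑ i ∈ Finset.Icc 2 r, ε i * trib i)

-- single term bound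
lemma single_le {ε : ℕ → ℕ} {r i : ℕ} (hi : i ∈ Finset.Icc 2 r) (he : ε i = 1) :
    trib i ≤ ∑ j ∈ Finset.Icc 2 r, ε j * trib j := by
  calc trib i = ε i * trib i := by rw [he, one_mul]
  _ ≤ _ := Finset.single_le_sum (f := fun j => ε j * trib j) (fun j _ => Nat.zero_le _) hi

lemma two_le {ε : ℕ → ℕ} {r i j : ℕ} (hij : i ≠ j) (hi : i ∈ Finset.Icc 2 r)
    (hj : j ∈ Finset.Icc 2 r) (hei : ε i = 1) (hej : ε j = 1) :
    trib i + trib j ≤ ∑ k ∈ Finset.Icc 2 r, ε k * trib k := by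
  rw [← Finset.add_sum_erase _ _ hi, hei, one_mul]
  have hj' : j ∈ (Finset.Icc 2 r).erase i := Finset.mem_erase.2 ⟨hij.symm, hj⟩
  have : trib j ≤ ∑ k ∈ (Finset.Icc 2 r).erase i, ε k * trib k := by
    calc trib j = ε j * trib j := by rw [hej, one_mul]
    _ ≤ _ := Finset.single_le_sum (f := fun k => ε k * trib k) (fun k _ => Nat.zero_le _) hj'
  omega

lemma exists_rep : ∀ n : ℕ, ∃ ε, IsRep ε n := by
  intro n
  induction n using Nat.strong_induction_on with
  | _ n ih =>
    rcases Nat.eq_zero_or_pos n with rfl | hn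
    · exact ⟨fun _ => 0, fun i => le_refl 0 |>.trans (by omega), fun i => rfl,
        2, fun i _ => rfl, by simp⟩
    · set s := Nat.findGreatest (fun k => trib k ≤ n) (n+2) with hs
      have h2s : 2 ≤ s := Nat.le_findGreatest (by omega) (by show trib 2 ≤ n; exact hn)
      have hsn : trib s ≤ n := Nat.findGreatest_spec (P := fun k => trib k ≤ n) (m := 2)
        (by omega) (by show trib 2 ≤ n; exact hn)
      have hlt : n < trib (s+1) := by
        by_contra hcon
        push_neg at hcon
        have hsb : s + 1 ≤ n + 2 := by
          have := le_trib (s - 1)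
          have : trib (s+1) ≥ s - 1 := by
            rw [show s - 1 + 2 = s + 1 by omega] at this; exact this
          omega
        have hsle : s < s + 1 := by omega
        exact Nat.findGreatest_is_greatest hsle hsb hcon
      set m := n - trib s with hm
      have hmn : m < n := by have := trib_pos (show 1 ≤ s by omega); omega
      obtain ⟨ε', h1', h3', r', hz', hsum'⟩ := ih m hmn
      have hmlt : m < trib (s-1) + trib (s-2) := by
        have := trib_succ_eq h2s
        omega
      -- all digits of ε' at indices ≥ s vanish
      have ha : ∀ j, s ≤ j → ε' j = 0 := by
        intro j hj
        by_contra hne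
        have hej : ε' j = 1 := by have := h1' j; omega
        have hjmem : j ∈ Finset.Icc 2 r' := by
          by_contra hmem; exact hne (hz' j hmem)
        have := single_le hjmem hej
        have hmono : trib s ≤ trib j := trib_mono hj
        have := trib_pred h2s
        omega
      have hb : ¬ (ε' (s-1) = 1 ∧ ε' (s-2) = 1) := by
        rintro ⟨hb1, hb2⟩
        have hm1 : s - 1 ∈ Finset.Icc 2 r' := by
          by_contra hmem; rw [hz' _ hmem] at hb1; omega
        have hm2 : s - 2 ∈ Finset.Icc 2 r' := by
          by_contra hmem; rw [hz' _ hmem] at hb2; omega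
        have := two_le (show s - 1 ≠ s - 2 by omega) hm1 hm2 hb1 hb2
        omega
      -- ε' vanishes outside Icc 2 (s-1), hence outside Icc 2 s
      have hzs : ∀ i, i ∉ Finset.Icc 2 s → ε' i = 0 := by
        intro i hi
        simp only [Finset.mem_Icc, not_and, not_le] at hi
        rcases lt_or_ge i 2 with h2 | h2
        · exact hz' i (by simp [Finset.mem_Icc]; omega)
        · exact ha i (by omega)
      have hsum_s : ∑ i ∈ Finset.Icc 2 s, ε' i * trib i = m := by
        rcases le_total s r' with h | h
        · rw [← sum_ext ε' h hzs, ← hsum']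
        · rw [sum_ext ε' h hz', ← hsum']
      refine ⟨Function.update ε' s 1, ?_, ?_, s, ?_, ?_⟩
      · intro i
        rcases eq_or_ne i s with rfl | hne
        · simp
        · simp [Function.update_of_ne hne]; exact h1' i
      · intro i
        rcases eq_or_ne i s with hi | hi
        · have h0 : ε' (i+1) = 0 := ha (i+1) (by omega)
          rw [Function.update_of_ne (show i+1 ≠ s by omega), h0, mul_zero, zero_mul]
        rcases eq_or_ne (i+1) s with hi1 | hi1
        · have h0 : ε' (i+2) = 0 := ha (i+2) (by omega)
          rw [Function.update_of_ne (show i+2 ≠ s by omega), h0, mul_zero]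
        rcases eq_or_ne (i+2) s with hi2 | hi2
        · -- i = s-2, i+1 = s-1
          have key : ε' i * ε' (i+1) = 0 := by
            rcases Nat.eq_zero_or_pos (ε' i) with h | h
            · rw [h, zero_mul]
            · rcases Nat.eq_zero_or_pos (ε' (i+1)) with h' | h'
              · rw [h', mul_zero]
              · exfalso
                refine hb ⟨?_, ?_⟩
                · rw [show s - 1 = i + 1 by omega]; have := h1' (i+1); omega
                · rw [show s - 2 = i by omega]; have := h1' i; omega
          rw [Function.update_of_ne hi, Function.update_of_ne hi1, key, zero_mul]
        · rw [Function.update_of_ne hi, Function.update_of_ne hi1, Function.update_of_ne hi2]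
          exact h3' i
      · intro i hi
        have : i ≠ s := by simp [Finset.mem_Icc] at hi; omega
        rw [Function.update_of_ne this]
        exact hzs i hi
      · have hsmem : s ∈ Finset.Icc 2 s := by simp [Finset.mem_Icc]; omega
        rw [← Finset.add_sum_erase _ _ hsmem, Function.update_self, one_mul]
        have : ∑ i ∈ (Finset.Icc 2 s).erase s, Function.update ε' s 1 i * trib i
            = ∑ i ∈ (Finset.Icc 2 s).erase s, ε' i * trib i := by
          refine Finset.sum_congr rfl fun i hi => ?_
          rw [Function.update_of_ne (Finset.mem_erase.1 hi).1]
        rw [this]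
        have hes : ε' s = 0 := ha s le_rfl
        have : ∑ i ∈ (Finset.Icc 2 s).erase s, ε' i * trib i
            = ∑ i ∈ Finset.Icc 2 s, ε' i * trib i := by
          rw [← Finset.add_sum_erase _ _ hsmem, hes, zero_mul, zero_add]
        rw [this, hsum_s]
        omega

-- top index analysis: for a rep of n > 0, there's s with ε s = 1, ε j = 0 for j > s,
-- trib s ≤ n < trib (s+1)
lemma top_index {ε : ℕ → ℕ} {n : ℕ} (h : IsRep ε n) (hn : 0 < n) :
    ∃ s, 2 ≤ s ∧ ε s = 1 ∧ (∀ j, s < j → ε j = 0) ∧ trib s ≤ n ∧ n < trib (s+1) := by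
  obtain ⟨h1, h3, r, hz, hsum⟩ := h
  have hex : ∃ i, i ≤ r ∧ ε i = 1 := by
    by_contra hcon
    push_neg at hcon
    have : ∀ i ∈ Finset.Icc 2 r, ε i * trib i = 0 := by
      intro i hi
      simp only [Finset.mem_Icc] at hi
      have := h1 i
      have := hcon i hi.2
      have : ε i = 0 := by omega
      rw [this, zero_mul]
    rw [Finset.sum_eq_zero this] at hsum
    omega
  set s := Nat.findGreatest (fun i => ε i = 1) r with hsdef
  obtain ⟨i, hir, hei⟩ := hex
  have hes : ε s = 1 := Nat.findGreatest_spec (P := fun i => ε i = 1) (m := i) hir hei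
  have h2s : 2 ≤ s := by
    by_contra hcon
    have : s ∉ Finset.Icc 2 r := by simp [Finset.mem_Icc]; omega
    rw [hz s this] at hes; omega
  have hsr : s ≤ r := Nat.findGreatest_le r
  have hja : ∀ j, s < j → ε j = 0 := by
    intro j hj
    rcases le_or_gt j r with hjr | hjr
    · have := Nat.findGreatest_is_greatest hj hjr
      have : ¬ ε j = 1 := this
      have := h1 j
      omega
    · exact hz j (by simp [Finset.mem_Icc]; omega)
  have hzs : ∀ i, i ∉ Finset.Icc 2 s → ε i = 0 := by
    intro i hi
    simp only [Finset.mem_Icc, not_and, not_le] at hi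
    rcases lt_or_ge i 2 with h2 | h2
    · exact hz i (by simp [Finset.mem_Icc]; omega)
    · exact hja i (by omega)
  have hsum_s : n = ∑ i ∈ Finset.Icc 2 s, ε i * trib i := by
    rw [hsum, sum_ext ε hsr hzs]
  refine ⟨s, h2s, hes, hja, ?_, ?_⟩
  · rw [hsum_s]
    exact single_le (by simp [Finset.mem_Icc]; omega) hes
  · rw [hsum_s]
    exact sum_lt ε h1 h3 s
lemma unique_rep : ∀ n : ℕ, ∀ ε ε', IsRep ε n → IsRep ε' n → ε = ε' := by
  intro n
  induction n using Nat.strong_induction_on with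
  | _ n ih =>
    intro ε ε' h h'
    rcases Nat.eq_zero_or_pos n with rfl | hn
    · -- all digits zero
      have key : ∀ (δ : ℕ → ℕ), IsRep δ 0 → ∀ i, δ i = 0 := by
        rintro δ ⟨h1, _, r, hz, hsum⟩ i
        by_contra hne
        have hei : δ i = 1 := by have := h1 i; omega
        have hmem : i ∈ Finset.Icc 2 r := by
          by_contra hm; exact hne (hz i hm)
        have := single_le hmem hei
        have h2i : 2 ≤ i := (Finset.mem_Icc.1 hmem).1
        have := trib_pos (show 1 ≤ i by omega)
        omega
      funext i; rw [key ε h i, key ε' h' i]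
    · obtain ⟨s, h2s, hes, hja, hlb, hub⟩ := top_index h hn
      obtain ⟨s', h2s', hes', hja', hlb', hub'⟩ := top_index h' hn
      have hss : s = s' := by
        have h1 : s < s' + 1 := by
          by_contra hc
          push_neg at hc
          have := trib_mono hc
          omega
        have h2 : s' < s + 1 := by
          by_contra hc
          push_neg at hc
          have := trib_mono hc
          omega
        omega
      subst hss
      -- reduce: update both at s to 0
      have hred : ∀ (δ : ℕ → ℕ), IsRep δ n → δ s = 1 → IsRep (Function.update δ s 0) (n - trib s) := by
        rintro δ ⟨h1, h3, r, hz, hsum⟩ hds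
        refine ⟨?_, ?_, r, ?_, ?_⟩
        · intro i
          rcases eq_or_ne i s with rfl | hi
          · simp
          · rw [Function.update_of_ne hi]; exact h1 i
        · intro i
          have hle : ∀ j, Function.update δ s 0 j ≤ δ j := by
            intro j
            rcases eq_or_ne j s with rfl | hj
            · simp
            · rw [Function.update_of_ne hj]
          have h0 := h3 i
          have := hle i; have := hle (i+1); have := hle (i+2)
          have : Function.update δ s 0 i * Function.update δ s 0 (i + 1) * Function.update δ s 0 (i + 2)
              ≤ δ i * δ (i+1) * δ (i+2) := by
            exact Nat.mul_le_mul (Nat.mul_le_mul (hle i) (hle (i+1))) (hle (i+2))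
          omega
        · intro i hi
          rcases eq_or_ne i s with rfl | hi'
          · simp
          · rw [Function.update_of_ne hi']; exact hz i hi
        · have hsmem : s ∈ Finset.Icc 2 r := by
            by_contra hm
            rw [hz s hm] at hds; omega
          rw [← Finset.add_sum_erase _ _ hsmem, Function.update_self, zero_mul, zero_add]
          have heq : ∑ i ∈ (Finset.Icc 2 r).erase s, Function.update δ s 0 i * trib i
              = ∑ i ∈ (Finset.Icc 2 r).erase s, δ i * trib i := by
            refine Finset.sum_congr rfl fun i hi => ?_
            rw [Function.update_of_ne (Finset.mem_erase.1 hi).1]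
          rw [heq]
          have : ∑ i ∈ Finset.Icc 2 r, δ i * trib i
              = δ s * trib s + ∑ i ∈ (Finset.Icc 2 r).erase s, δ i * trib i :=
            (Finset.add_sum_erase _ _ hsmem).symm
          rw [hds, one_mul] at this
          omega
      have hmn : n - trib s < n := by
        have := trib_pos (show 1 ≤ s by omega); omega
      have heq := ih (n - trib s) hmn _ _ (hred ε h hes) (hred ε' h' hes')
      funext i
      rcases eq_or_ne i s with rfl | hi
      · rw [hes, hes']
      · have := congrFun heq i
        rwa [Function.update_of_ne hi, Function.update_of_ne hi] at this

/-- Tribonacci Zeckendorf theorem: every positive integer has a unique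
representation as a sum of tribonacci numbers `t_i` (`i ≥ 2`) with digits in
`{0,1}` and no three consecutive ones. -/
theorem tribonacci_zeckendorf (n : ℕ) (hn : 1 ≤ n) :
    ∃! ε : ℕ → ℕ,
      (∀ i, ε i ≤ 1) ∧
      (∀ i, ε i * ε (i + 1) * ε (i + 2) = 0) ∧
      (∃ r, (∀ i, i ∉ Finset.Icc 2 r → ε i = 0) ∧
        n = ∑ i ∈ Finset.Icc 2 r, ε i * trib i) := by
  obtain ⟨ε, hε⟩ := exists_rep n
  exact ⟨ε, hε, fun ε' h' => unique_rep n ε' ε h' hε⟩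
end

section
/- Fix m ≥ 1 and let z be the degree-m metallic mean sequence defined by z_0 = z_1 = 1 and z_n = m·z_{n-1} + z_{n-2}. Then every positive integer n has a unique representation n = Σ_{i=1}^{r} ε_i z_i with ε_i ∈ {0,…,m} and the property that whenever ε_{i+1} = m, then ε_i = 0. -/
/-!
An admissible digit string with digits up to position `r` sums to less than `met m (r + 1)`,
because a top digit `m` forces a zero just below it and
`met m (r + 2) = m * met m (r + 1) + met m r`. Hence the top digit of an admissible expansion is
the quotient of `n` by `met m (r + 1)` and the lower digits expand the remainder, which gives
uniqueness; conversely, dividing by `met m (r + 1)` and expanding the remainder admissibly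
(the remainder is below `met m r` when the quotient is `m`) produces an expansion.
-/

/-- Degree-`m` metallic mean sequence with z 0 = z 1 = 1 and
`z (n+2) = m * z (n+1) + z n`. -/
def met (m : ℕ) : ℕ → ℕ
  | 0 => 1
  | 1 => 1
  | n + 2 => m * met m (n + 1) + met m n

section Metallic

variable {m : ℕ}

theorem met_succ_succ (n : ℕ) : met m (n + 2) = m * met m (n + 1) + met m n := rfl

theorem met_pos : ∀ n, 0 < met m n
  | 0 | 1 => Nat.one_pos
  | n + 2 => Nat.add_pos_right _ (met_pos n)

theorem met_succ_lt_met_succ_succ (hm : 1 ≤ m) (n : ℕ) : met m (n + 1) < met m (n + 2) := by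
  rw [met_succ_succ]
  have := met_pos (m := m) n
  nlinarith

theorem met_le_met_succ (hm : 1 ≤ m) : ∀ n, met m n ≤ met m (n + 1)
  | 0 => le_rfl
  | n + 1 => (met_succ_lt_met_succ_succ hm n).le

theorem lt_met_succ (hm : 1 ≤ m) : ∀ n, n < met m (n + 1)
  | 0 => met_pos 1
  | n + 1 => Nat.lt_of_le_of_lt (lt_met_succ hm n) (met_succ_lt_met_succ_succ hm n)

def digitSum (m : ℕ) (ε : ℕ → ℕ) (r : ℕ) : ℕ := ∑ i ∈ Finset.Icc 1 r, ε i * met m i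

theorem digitSum_zero (ε : ℕ → ℕ) : digitSum m ε 0 = 0 := by
  simp [digitSum]

theorem digitSum_succ (ε : ℕ → ℕ) (r : ℕ) :
    digitSum m ε (r + 1) = digitSum m ε r + ε (r + 1) * met m (r + 1) :=
  Finset.sum_Icc_succ_top (Nat.le_add_left 1 r) _

theorem digitSum_congr {ε δ : ℕ → ℕ} {r : ℕ} (h : ∀ i ∈ Finset.Icc 1 r, ε i = δ i) :
    digitSum m ε r = digitSum m δ r :=
  Finset.sum_congr rfl fun i hi => by rw [h i hi]

theorem digitSum_eq_of_le {ε : ℕ → ℕ} {r s : ℕ} (hε : ∀ i ∉ Finset.Icc 1 r, ε i = 0)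
    (hrs : r ≤ s) : digitSum m ε s = digitSum m ε r :=
  (Finset.sum_subset (Finset.Icc_subset_Icc_right hrs) fun i _ hi => by
    rw [hε i hi, zero_mul]).symm

structure MetallicDigits (m : ℕ) (ε : ℕ → ℕ) : Prop where
  le : ∀ i, ε i ≤ m
  eq_zero_of_succ_eq : ∀ i, ε (i + 1) = m → ε i = 0

namespace MetallicDigits

variable {ε δ : ℕ → ℕ}

theorem digitSum_lt (hε : MetallicDigits m ε) : ∀ r, digitSum m ε r < met m (r + 1)
  | 0 => by simp [digitSum_zero, met_pos]
  | r + 1 => by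
    rw [digitSum_succ, met_succ_succ]
    rcases (hε.le (r + 1)).lt_or_eq with hlt | heq
    · have hr := hε.digitSum_lt r
      calc digitSum m ε r + ε (r + 1) * met m (r + 1)
          < (ε (r + 1) + 1) * met m (r + 1) := by rw [add_one_mul]; omega
        _ ≤ m * met m (r + 1) := Nat.mul_le_mul_right _ hlt
        _ ≤ m * met m (r + 1) + met m r := Nat.le_add_right _ _
    · have hr : digitSum m ε r < met m r := by
        cases r with
        | zero => simp [digitSum_zero, met_pos]
        | succ r =>
          rw [digitSum_succ, hε.eq_zero_of_succ_eq _ heq, zero_mul, add_zero]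
          exact hε.digitSum_lt r
      rw [heq]
      omega

theorem digitSum_succ_div (hε : MetallicDigits m ε) (r : ℕ) :
    digitSum m ε (r + 1) / met m (r + 1) = ε (r + 1) := by
  rw [digitSum_succ, Nat.add_mul_div_right _ _ (met_pos _),
    Nat.div_eq_of_lt (hε.digitSum_lt r), zero_add]

theorem digitSum_succ_mod (hε : MetallicDigits m ε) (r : ℕ) :
    digitSum m ε (r + 1) % met m (r + 1) = digitSum m ε r := by
  rw [digitSum_succ, Nat.add_mul_mod_self_right, Nat.mod_eq_of_lt (hε.digitSum_lt r)]

theorem eq_of_digitSum_eq (hε : MetallicDigits m ε) (hδ : MetallicDigits m δ) :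
    ∀ {r}, digitSum m ε r = digitSum m δ r → ∀ i ∈ Finset.Icc 1 r, ε i = δ i
  | 0, _, i, hi => by simp at hi
  | r + 1, h, i, hi => by
    obtain rfl | hir : i = r + 1 ∨ i ∈ Finset.Icc 1 r := by
      simp only [Finset.mem_Icc] at hi ⊢; omega
    · rw [← hε.digitSum_succ_div, ← hδ.digitSum_succ_div, h]
    · refine hε.eq_of_digitSum_eq hδ ?_ i hir
      rw [← hε.digitSum_succ_mod, ← hδ.digitSum_succ_mod, h]

theorem ext_of_digitSum_eq (hε : MetallicDigits m ε) (hδ : MetallicDigits m δ) {r s : ℕ}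
    (hεr : ∀ i ∉ Finset.Icc 1 r, ε i = 0) (hδs : ∀ i ∉ Finset.Icc 1 s, δ i = 0)
    (h : digitSum m ε r = digitSum m δ s) : ε = δ := by
  have hmax : digitSum m ε (max r s) = digitSum m δ (max r s) := by
    rw [digitSum_eq_of_le hεr (le_max_left r s), digitSum_eq_of_le hδs (le_max_right r s), h]
  funext i
  by_cases hi : i ∈ Finset.Icc 1 (max r s)
  · exact hε.eq_of_digitSum_eq hδ hmax i hi
  · simp only [Finset.mem_Icc] at hi
    rw [hεr i (by simp only [Finset.mem_Icc]; omega), hδs i (by simp only [Finset.mem_Icc]; omega)]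

theorem update_succ (hδ : MetallicDigits m δ) {k d : ℕ} (hd : d ≤ m) (hnext : δ (k + 2) ≠ m)
    (hprev : d = m → δ k = 0) : MetallicDigits m (Function.update δ (k + 1) d) where
  le i := by
    rcases eq_or_ne i (k + 1) with rfl | hi
    · rwa [Function.update_self]
    · rw [Function.update_of_ne hi]; exact hδ.le i
  eq_zero_of_succ_eq i h := by
    rcases eq_or_ne i (k + 1) with rfl | hi
    · rw [Function.update_of_ne (by omega)] at h; exact absurd h hnext
    rw [Function.update_of_ne hi]
    rcases eq_or_ne i k with rfl | hik
    · rw [Function.update_self] at h; exact hprev h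
    · rw [Function.update_of_ne (by omega)] at h; exact hδ.eq_zero_of_succ_eq i h

end MetallicDigits

theorem exists_metallicDigits_digitSum_eq (hm : 1 ≤ m) :
    ∀ r n, n < met m (r + 1) →
      ∃ ε, MetallicDigits m ε ∧ (∀ i ∉ Finset.Icc 1 r, ε i = 0) ∧ digitSum m ε r = n
  | 0, n, hn => ⟨0, ⟨fun _ => Nat.zero_le m, fun _ _ => rfl⟩, fun _ _ => rfl, by
      simp only [met, Nat.lt_one_iff] at hn; rw [hn, digitSum_zero]⟩
  | r + 1, n, hn => by
    rw [met_succ_succ] at hn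
    set b := met m (r + 1)
    have hb : 0 < b := met_pos _
    obtain ⟨δ, hδ, hδ_supp, hδ_sum⟩ :=
      exists_metallicDigits_digitSum_eq hm r (n % b) (Nat.mod_lt _ hb)
    have hdiv := Nat.div_add_mod n b
    have hq : n / b ≤ m := by
      have := met_le_met_succ hm r
      rw [← Nat.lt_succ_iff, Nat.div_lt_iff_lt_mul hb]
      nlinarith
    have hδr : n / b = m → δ r = 0 := by
      intro hqm
      have hrem : n % b < met m r := by rw [hqm, mul_comm] at hdiv; omega
      cases r with
      | zero => exact hδ_supp 0 (by simp)
      | succ r => rw [← hδ.digitSum_succ_div, hδ_sum, Nat.div_eq_of_lt hrem]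
    have hlow : ∀ i ∈ Finset.Icc 1 r, i ≠ r + 1 := by
      intro i hi; simp only [Finset.mem_Icc] at hi; omega
    refine ⟨Function.update δ (r + 1) (n / b),
      hδ.update_succ hq (by rw [hδ_supp (r + 2) (by simp)]; omega) hδr, ?_, ?_⟩
    · intro i hi
      simp only [Finset.mem_Icc] at hi
      rw [Function.update_of_ne (by omega)]
      exact hδ_supp i (by simp only [Finset.mem_Icc]; omega)
    · rw [digitSum_succ, Function.update_self,
        digitSum_congr fun i hi => Function.update_of_ne (hlow i hi) _ δ, hδ_sum]
      linarith

end Metallic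

theorem metallic_zeckendorf_general (m : ℕ) (hm : 1 ≤ m) (n : ℕ) :
    ∃! ε : ℕ → ℕ,
      (∀ i, ε i ≤ m) ∧
      (∀ i, ε (i + 1) = m → ε i = 0) ∧
      (∃ r, (∀ i, i ∉ Finset.Icc 1 r → ε i = 0) ∧
        n = ∑ i ∈ Finset.Icc 1 r, ε i * met m i) := by
  obtain ⟨ε, ⟨hε_le, hε_zero⟩, hε_supp, hε_sum⟩ :=
    exists_metallicDigits_digitSum_eq hm n n (lt_met_succ hm n)
  refine ⟨ε, ⟨hε_le, hε_zero, n, hε_supp, hε_sum.symm⟩, ?_⟩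
  rintro δ ⟨hδ_le, hδ_zero, s, hδ_supp, hδ_sum⟩
  exact MetallicDigits.ext_of_digitSum_eq ⟨hδ_le, hδ_zero⟩ ⟨hε_le, hε_zero⟩ hδ_supp hε_supp
    (hδ_sum.symm.trans hε_sum.symm)

/-- Metallic mean Zeckendorf theorem: every positive integer has a unique
representation `n = Σ ε_i z_i` with digits `ε_i ∈ {0,…,m}` such that
`ε_{i+1} = m` implies `ε_i = 0`. -/
theorem metallic_zeckendorf (m : ℕ) (hm : 1 ≤ m) (n : ℕ) (hn : 1 ≤ n) :
    ∃! ε : ℕ → ℕ,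
      (∀ i, ε i ≤ m) ∧
      (∀ i, ε (i + 1) = m → ε i = 0) ∧
      (∃ r, (∀ i, i ∉ Finset.Icc 1 r → ε i = 0) ∧
        n = ∑ i ∈ Finset.Icc 1 r, ε i * met m i) :=
  metallic_zeckendorf_general m hm n
end

section
/- A subshift (X, σ) is semi-mixing if and only if there exists a length ℓ and a proper nonempty subset S ⊊ L^ℓ of the admitted words of length ℓ such that for every admitted word w there exists N such that for all n ≥ N, there exist a word u of length n and s ∈ S with the concatenation w u s admitted. -/
/-- The shift map on bi-infinite sequences. -/
def shiftMap {A : Type*} (x : ℤ → A) : ℤ → A := fun n => x (n + 1)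

/-- A finite word `u` is admitted by `X` if it occurs as a subword of some
element of `X`. -/
def admitted {A : Type*} (X : Set (ℤ → A)) (u : List A) : Prop :=
  ∃ x ∈ X, ∃ i : ℤ, ∀ j : Fin u.length, x (i + (j : ℕ)) = u.get j

namespace SemiMix
variable {A : Type*}

lemma shiftMap_iterate (x : ℤ → A) (n : ℕ) (k : ℤ) : shiftMap^[n] x k = x (k + n) := by
  induction n generalizing x k with
  | zero => simp
  | succ n ih =>
      rw [Function.iterate_succ_apply, ih]
      simp [shiftMap]; ring_nf

def shiftZ (i : ℤ) (x : ℤ → A) : ℤ → A := fun n => x (n + i)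

lemma shiftZ_mem {X : Set (ℤ → A)} (hinv : shiftMap '' X = X) (i : ℤ) :
    ∀ {x}, x ∈ X → shiftZ i x ∈ X := by
  induction i using Int.induction_on with
  | zero =>
      intro x hx
      have : shiftZ 0 x = x := by funext n; simp [shiftZ]
      rwa [this]
  | succ i ih =>
      intro x hx
      have h1 : shiftMap (shiftZ i x) ∈ X := by
        rw [← hinv]; exact ⟨_, ih hx, rfl⟩
      have : shiftZ (i + 1) x = shiftMap (shiftZ i x) := by
        funext n; simp [shiftZ, shiftMap]; ring_nf
      rwa [this]
  | pred i ih =>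
      intro x hx
      have hx' : shiftZ (-i) x ∈ X := ih hx
      rw [← hinv] at hx'
      obtain ⟨y, hy, hyx⟩ := hx'
      have : shiftZ (-i - 1) x = y := by
        funext n
        have h := congrFun hyx (n - 1)
        simp [shiftZ, shiftMap] at h ⊢
        rw [h]; ring_nf
      rwa [this]

def word (x : ℤ → A) (i : ℤ) (L : ℕ) : List A := List.ofFn fun j : Fin L => x (i + j)

@[simp] lemma word_length (x : ℤ → A) (i : ℤ) (L : ℕ) : (word x i L).length = L := by
  simp [word]

lemma word_get (x : ℤ → A) (i : ℤ) (L : ℕ) (j : Fin (word x i L).length) :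
    (word x i L).get j = x (i + (j : ℕ)) := by
  rw [List.get_eq_getElem]
  simp [word, List.get_ofFn]

lemma admitted_word {X : Set (ℤ → A)} {x : ℤ → A} (hx : x ∈ X) (i : ℤ) (L : ℕ) :
    admitted X (word x i L) :=
  ⟨x, hx, i, fun j => (word_get x i L j).symm⟩

lemma admitted_at_zero {X : Set (ℤ → A)} (hinv : shiftMap '' X = X) {w : List A}
    (h : admitted X w) : ∃ x ∈ X, ∀ j : Fin w.length, x ((j : ℕ) : ℤ) = w.get j := by
  obtain ⟨x, hx, i, hxi⟩ := h
  refine ⟨shiftZ i x, shiftZ_mem hinv i hx, fun j => ?_⟩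
  have := hxi j
  simpa [shiftZ, add_comm] using this

lemma word_eq_of_match {x : ℤ → A} {w : List A} {i : ℤ}
    (h : ∀ j : Fin w.length, x (i + (j : ℕ)) = w.get j) : word x i w.length = w := by
  apply List.ext_get (by simp)
  intro n h1 h2
  rw [word_get]
  exact h ⟨n, h2⟩

lemma match_append (x : ℤ → A) (i : ℤ) (w u s : List A)
    (hw : ∀ j : Fin w.length, x (i + (j:ℕ)) = w.get j)
    (hu : ∀ j : Fin u.length, x (i + w.length + (j:ℕ)) = u.get j)
    (hs : ∀ j : Fin s.length, x (i + w.length + u.length + (j:ℕ)) = s.get j) :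
    ∀ j : Fin (w ++ u ++ s).length, x (i + (j:ℕ)) = (w ++ u ++ s).get j := by
  intro j
  have hjlen : (j : ℕ) < w.length + u.length + s.length := by
    have := j.isLt; simp [List.length_append] at this; omega
  rw [List.get_eq_getElem]
  by_cases h1 : (j:ℕ) < w.length
  · have := hw ⟨j, h1⟩
    simp only [List.get_eq_getElem] at this
    rw [this]
    rw [List.getElem_append_left (by simp; omega), List.getElem_append_left h1]
  · by_cases h2 : (j:ℕ) < w.length + u.length
    · have hlt : (j:ℕ) - w.length < u.length := by omega
      have := hu ⟨(j:ℕ) - w.length, hlt⟩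
      simp only [List.get_eq_getElem] at this
      have e : i + w.length + ((j:ℕ) - w.length : ℕ) = i + (j:ℕ) := by omega
      rw [e] at this
      rw [this]
      rw [List.getElem_append_left (by simp; omega),
        List.getElem_append_right (by omega)]
    · have hlt : (j:ℕ) - w.length - u.length < s.length := by omega
      have := hs ⟨(j:ℕ) - w.length - u.length, hlt⟩
      simp only [List.get_eq_getElem] at this
      have e : i + w.length + u.length + ((j:ℕ) - w.length - u.length : ℕ) = i + (j:ℕ) := by
        omega
      rw [e] at this
      rw [this]
      rw [List.getElem_append_right (by simp; omega)]
      congr 1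
      simp; omega

lemma isOpen_cylinder [TopologicalSpace A] [DiscreteTopology A] (I : Finset ℤ) (x : ℤ → A) :
    IsOpen {y : ℤ → A | ∀ i ∈ I, y i = x i} := by
  have : {y : ℤ → A | ∀ i ∈ I, y i = x i} = ⋂ i ∈ I, (fun y : ℤ → A => y i) ⁻¹' {x i} := by
    ext y; simp
  rw [this]
  exact isOpen_biInter_finset fun i _ =>
    (isOpen_discrete _).preimage (continuous_apply i)

lemma exists_cylinder_subset [TopologicalSpace A] [DiscreteTopology A] {O : Set (ℤ → A)}
    (hO : IsOpen O) {x : ℤ → A} (hx : x ∈ O) :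
    ∃ I : Finset ℤ, {y : ℤ → A | ∀ i ∈ I, y i = x i} ⊆ O := by
  obtain ⟨I, u, hu, hsub⟩ := isOpen_pi_iff.mp hO x hx
  refine ⟨I, fun y hy => hsub fun i hi => ?_⟩
  rw [Set.mem_setOf_eq] at hy
  rw [hy i hi]
  exact (hu i hi).2

end SemiMix

open SemiMix in
/-- A subshift `(X, σ)` over a finite (discrete) alphabet is semi-mixing (there
is a proper clopen `U ⊆ X` such that every nonempty open subset of `X`
eventually always intersects `U` under the shift) if and only if there are a
length `ℓ` and a nonempty proper subset `S` of the admitted words of length `ℓ`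
such that every admitted word `w` can, for every sufficiently large `n`, be
extended by a word `u` of length `n` followed by some `s ∈ S` to an admitted
word `w ++ u ++ s`. -/
theorem semimixing_iff_combinatorial {A : Type*} [Fintype A]
    [TopologicalSpace A] [DiscreteTopology A]
    (X : Set (ℤ → A)) (hne : X.Nonempty) (hcl : IsClosed X)
    (hinv : shiftMap '' X = X) :
    (∃ U : Set (ℤ → A), U ⊆ X ∧ U ≠ X ∧ IsClosed U ∧
      (∃ O : Set (ℤ → A), IsOpen O ∧ U = O ∩ X) ∧
      ∀ V : Set (ℤ → A), IsOpen V → (V ∩ X).Nonempty →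
        ∃ N : ℕ, ∀ n ≥ N, ((shiftMap^[n] '' (V ∩ X)) ∩ U).Nonempty) ↔
    (∃ (ℓ : ℕ) (S : Set (List A)), S.Nonempty ∧
      S ⊂ {w : List A | w.length = ℓ ∧ admitted X w} ∧
      ∀ w : List A, admitted X w →
        ∃ N : ℕ, ∀ n ≥ N, ∃ (u : List A) (s : List A),
          u.length = n ∧ s ∈ S ∧ admitted X (w ++ u ++ s)) := by
  constructor
  · rintro ⟨U, hUX, hUne, hUcl, ⟨O, hOopen, hUO⟩, hmix⟩
    -- U is nonempty
    have hUnonempty : U.Nonempty := by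
      obtain ⟨N, hN⟩ := hmix Set.univ isOpen_univ (by simpa using hne)
      obtain ⟨p, _, hpU⟩ := hN N le_rfl
      exact ⟨p, hpU⟩
    obtain ⟨p, hpU⟩ := hUnonempty
    -- a point of X outside U
    have hq : ∃ q ∈ X, q ∉ U := by
      by_contra h
      push_neg at h
      exact hUne (Set.Subset.antisymm hUX h)
    obtain ⟨q, hqX, hqU⟩ := hq
    -- compactness of U
    have hUcompact : IsCompact U := hUcl.isCompact
    -- choose cylinders
    have hmemO : ∀ z : U, (z : ℤ → A) ∈ O := fun z => (hUO.subset z.2).1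
    choose I hI using fun z : U => exists_cylinder_subset hOopen (hmemO z)
    have hcover : U ⊆ ⋃ z : U, {y : ℤ → A | ∀ i ∈ I z, y i = (z : ℤ → A) i} := by
      intro y hy
      exact Set.mem_iUnion.mpr ⟨⟨y, hy⟩, fun i _ => rfl⟩
    obtain ⟨t, ht⟩ := hUcompact.elim_finite_subcover _
      (fun z : U => isOpen_cylinder (I z) (z : ℤ → A)) hcover
    set m : ℕ := t.sup (fun z => (I z).sup Int.natAbs) with hm
    -- key: membership in U only depends on the window [-m, m]
    have hkey : ∀ y ∈ X, ∀ z ∈ U, (∀ i : ℤ, i.natAbs ≤ m → y i = z i) → y ∈ U := by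
      intro y hyX z hzU hyz
      obtain ⟨x0, hx0⟩ := Set.mem_iUnion.mp (ht hzU)
      simp only [Set.mem_iUnion, Set.mem_setOf_eq] at hx0
      obtain ⟨hx0t, hz⟩ := hx0
      have hyO : y ∈ O := by
        apply hI x0
        intro i hi
        have hbound : i.natAbs ≤ m := le_trans (Finset.le_sup hi)
          (Finset.le_sup (f := fun z : U => (I z).sup Int.natAbs) hx0t)
        rw [hyz i hbound]
        exact hz i hi
      rw [hUO]; exact ⟨hyO, hyX⟩
    set L : ℕ := 2 * m + 1 with hL
    set S : Set (List A) := (fun z => word z (-(m : ℤ)) L) '' U with hS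
    -- characterization of U via S
    have hchar : ∀ y ∈ X, word y (-(m : ℤ)) L ∈ S → y ∈ U := by
      intro y hyX hyS
      obtain ⟨z, hzU, hze⟩ := hyS
      have hfn := List.ofFn_inj.mp hze
      apply hkey y hyX z hzU
      intro i hi
      have h1 : (0 : ℤ) ≤ i + m := by omega
      have h2 : (i + m).toNat < L := by omega
      have := congrFun hfn ⟨(i + m).toNat, h2⟩
      simp only at this
      have e : -(m : ℤ) + ((i + m).toNat : ℕ) = i := by omega
      rw [e] at this
      exact this.symm
    refine ⟨L, S, ⟨word p (-(m : ℤ)) L, p, hpU, rfl⟩, ?_, ?_⟩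
    · constructor
      · rintro w ⟨z, hzU, rfl⟩
        exact ⟨word_length _ _ _, admitted_word (hUX hzU) _ _⟩
      · intro hsub
        have : word q (-(m : ℤ)) L ∈ S :=
          hsub ⟨word_length _ _ _, admitted_word hqX _ _⟩
        exact hqU (hchar q hqX this)
    · intro w hw
      obtain ⟨x, hxX, hxw⟩ := admitted_at_zero hinv hw
      set k : ℕ := w.length with hk
      set V : Set (ℤ → A) := {y | ∀ j : Fin w.length, y ((j : ℕ) : ℤ) = w.get j} with hV
      have hVopen : IsOpen V := by
        have : V = ⋂ j : Fin w.length, (fun y : ℤ → A => y ((j : ℕ) : ℤ)) ⁻¹' {w.get j} := by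
          ext y; simp [hV, Set.mem_iInter]
        rw [this]
        exact isOpen_iInter_of_finite fun j =>
          (isOpen_discrete _).preimage (continuous_apply _)
      obtain ⟨N, hN⟩ := hmix V hVopen ⟨x, hxw, hxX⟩
      refine ⟨N, fun n' hn' => ?_⟩
      set n : ℕ := n' + k + m with hn
      obtain ⟨pt, hpt1, hptU⟩ := hN n (by omega)
      obtain ⟨y, ⟨hyV, hyX⟩, rfl⟩ := hpt1
      set u : List A := word y (k : ℤ) n' with hu
      set s : List A := word (shiftMap^[n] y) (-(m : ℤ)) L with hs'
      have hsS : s ∈ S := ⟨shiftMap^[n] y, hptU, rfl⟩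
      refine ⟨u, s, word_length _ _ _, hsS, y, hyX, 0, ?_⟩
      apply match_append
      · intro j
        have := hyV j
        simpa using this
      · intro j
        rw [word_get]
        congr 1
        omega
      · intro j
        rw [word_get]
        have hjL : ((j : ℕ) : ℤ) = (j : ℕ) := rfl
        have : shiftMap^[n] y (-(m : ℤ) + (j : ℕ)) = y (-(m : ℤ) + (j : ℕ) + n) :=
          shiftMap_iterate y n _
        rw [this]
        have hul : u.length = n' := word_length _ _ _
        rw [hul]
        congr 1
        omega
  · rintro ⟨ℓ, S, hSne, hSsub, hext⟩
    set F : (ℤ → A) → (Fin ℓ → A) := fun y j => y ((j : ℕ) : ℤ) with hF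
    have hFcont : Continuous F := continuous_pi fun j => continuous_apply _
    set O : Set (ℤ → A) := F ⁻¹' {g : Fin ℓ → A | List.ofFn g ∈ S} with hO
    have hOopen : IsOpen O := (isOpen_discrete _).preimage hFcont
    have hOclosed : IsClosed O := (isClosed_discrete _).preimage hFcont
    have hmemO : ∀ y : ℤ → A, y ∈ O ↔ word y 0 ℓ ∈ S := by
      intro y
      have hwF : word y 0 ℓ = List.ofFn (F y) := by
        simp only [word, hF]
        congr 1
        funext j
        rw [zero_add]
      simp only [hO, Set.mem_preimage, Set.mem_setOf_eq, hwF]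
    refine ⟨O ∩ X, Set.inter_subset_right, ?_, hOclosed.inter hcl,
      ⟨O, hOopen, rfl⟩, ?_⟩
    · -- proper
      obtain ⟨w0, ⟨hw0len, hw0adm⟩, hw0S⟩ := Set.exists_of_ssubset hSsub
      obtain ⟨y, hyX, hym⟩ := admitted_at_zero hinv hw0adm
      have hwy : word y 0 w0.length = w0 := word_eq_of_match (by simpa using hym)
      intro heq
      have hyU : y ∈ O ∩ X := by rw [heq]; exact hyX
      have : word y 0 ℓ ∈ S := (hmemO y).mp hyU.1
      rw [← hw0len, hwy] at this
      exact hw0S this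
    · intro V hVopen ⟨x, hxV, hxX⟩
      obtain ⟨I, hIsub⟩ := exists_cylinder_subset hVopen hxV
      set k : ℕ := I.sup Int.natAbs with hk
      have hIk : ∀ i ∈ I, i.natAbs ≤ k := fun i hi => Finset.le_sup hi
      obtain ⟨N, hN⟩ := hext (word x (-(k : ℤ)) (2 * k + 1)) (admitted_word hxX _ _)
      refine ⟨N + k + 1, fun n hn => ?_⟩
      obtain ⟨u, s, hulen, hsS, hadm⟩ := hN (n - k - 1) (by omega)
      obtain ⟨hslen, _⟩ := hSsub.1 hsS
      obtain ⟨z, hzX, hmatch⟩ := admitted_at_zero hinv hadm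
      set w : List A := word x (-(k : ℤ)) (2 * k + 1) with hw
      have hwlen : w.length = 2 * k + 1 := word_length _ _ _
      have htotal : (w ++ u ++ s).length = (2 * k + 1) + (n - k - 1) + s.length := by
        first
          | (simp only [List.length_append, hwlen, hulen]; omega)
          | simp only [List.length_append, hwlen, hulen]
      set y : ℤ → A := shiftZ (k : ℤ) z with hy
      have hyX : y ∈ X := shiftZ_mem hinv _ hzX
      have hyz : ∀ p : ℤ, y p = z (p + k) := fun p => rfl
      -- y matches w ++ u ++ s starting at -k
      have hymatch : ∀ (j : ℕ) (hj : j < (w ++ u ++ s).length),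
          y (-(k : ℤ) + j) = (w ++ u ++ s)[j] := by
        intro j hj
        rw [hyz]
        have e : -(k : ℤ) + j + k = ((j : ℕ) : ℤ) := by omega
        rw [e]
        have := hmatch ⟨j, hj⟩
        simpa [List.get_eq_getElem] using this
      have hyV : y ∈ V := by
        apply hIsub
        intro i hi
        have hik := hIk i hi
        have h1 : (i + k).toNat < w.length := by rw [hwlen]; omega
        have h1' : (i + k).toNat < (w ++ u ++ s).length := by
          rw [htotal, hwlen] at *; omega
        have := hymatch (i + k).toNat h1'
        have e : -(k : ℤ) + ((i + k).toNat : ℕ) = i := by omega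
        rw [e] at this
        rw [this]
        rw [List.getElem_append_left (by simp [hwlen]; omega),
          List.getElem_append_left h1]
        have := word_get x (-(k : ℤ)) (2 * k + 1) ⟨(i + k).toNat, by simp only [word_length]; omega⟩
        simp only [List.get_eq_getElem] at this
        rw [this]
        congr 1 <;> try omega
      have hiter : shiftMap^[n] y = shiftZ (n : ℤ) y :=
        funext fun p => shiftMap_iterate y n p
      have hsword : word (shiftMap^[n] y) 0 s.length = s := by
        apply word_eq_of_match
        intro j
        rw [shiftMap_iterate]
        have hjtot : w.length + u.length + (j : ℕ) < (w ++ u ++ s).length := by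
          simp [hwlen, hulen]; omega
        have := hymatch (w.length + u.length + (j : ℕ)) hjtot
        have e : -(k : ℤ) + ((w.length + u.length + (j : ℕ) : ℕ) : ℤ) = 0 + (j : ℕ) + n := by
          rw [hwlen, hulen]; push_cast; omega
        rw [e] at this
        rw [this]
        rw [List.get_eq_getElem,
          List.getElem_append_right (by first | (simp; omega) | simp)]
        congr 1 <;> simp
      have hsO : shiftMap^[n] y ∈ O := by
        rw [hmemO, ← hslen, hsword]
        exact hsS
      have hsX : shiftMap^[n] y ∈ X := by
        rw [hiter]
        exact shiftZ_mem hinv _ hyX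
      exact ⟨shiftMap^[n] y, ⟨y, ⟨hyV, hyX⟩, rfl⟩, hsO, hsX⟩
end
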